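/- arXiv:2508.13441 — 4 statements merged into one kernel-verified Lean document; each statement's English description precedes it below -/
import Mathlib

section
/- Let S₀, S₁ : [0,∞) → ℝ be solutions of the ODE S' = f(S) with f : ℝ → ℝ Lipschitz and satisfying 0 < m ≤ f ≤ M, with initial conditions S₀(0) = x₀ and S₁(0) = x₁. Then for all t ≥ 0, S₀(t) ≤ S₁(t) + (x₀ − x₁)₊ · (M/m). -/
open Real Set Filter Topology

/-- One-sided comparison of two solutions of the same Lipschitz ODE on `[0,∞)`. -/
lemma ode_comparison (f A B : ℝ → ℝ) (K' : ℝ) (hK' : 0 ≤ K')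
    (hlip : ∀ a b : ℝ, |f a - f b| ≤ K' * |a - b|)
    (hA : ∀ t ≥ (0:ℝ), HasDerivAt A (f (A t)) t)
    (hB : ∀ t ≥ (0:ℝ), HasDerivAt B (f (B t)) t)
    (h0 : A 0 ≤ B 0) : ∀ t ≥ (0:ℝ), A t ≤ B t := by
  intro T hT
  set φ : ℝ → ℝ := fun t => A t - B t with hφ
  set v : ℝ → ℝ := fun t => max (φ t) 0 with hv
  set v' : ℝ → ℝ := fun t => if 0 < φ t then f (A t) - f (B t) else 0 with hv'
  have hφderiv : ∀ t ≥ (0:ℝ), HasDerivAt φ (f (A t) - f (B t)) t := fun t ht =>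
    (hA t ht).sub (hB t ht)
  have hφcont : ContinuousOn φ (Icc 0 T) := fun t ht =>
    ((hφderiv t ht.1).continuousAt).continuousWithinAt
  have hvcont : ContinuousOn v (Icc 0 T) := fun x hx => (hφcont x hx).max continuousWithinAt_const
  have key := le_gronwallBound_of_liminf_deriv_right_le (f := v) (f' := v')
      (δ := 0) (K := K') (ε := 0) (a := 0) (b := T) hvcont ?_ ?_ ?_
  · have := key T (by constructor <;> linarith)
    rw [gronwallBound_ε0_δ0] at this
    have : φ T ≤ 0 := le_trans (le_max_left _ _) this
    simpa [hφ] using this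
  · -- liminf slope condition
    intro x hx r hr
    rcases lt_trichotomy (φ x) 0 with hneg | hzero | hpos
    · -- φ x < 0 : v is locally 0
      have hvx : v x = 0 := by simp [hv, le_of_lt hneg]
      have hr0 : 0 < r := by simpa [hv', not_lt.mpr (le_of_lt hneg)] using hr
      have hcont : ContinuousAt φ x := (hφderiv x hx.1).continuousAt
      have hev : ∀ᶠ z in 𝓝[>] x, φ z < 0 :=
        ((hcont.tendsto.eventually_lt_const hneg)).filter_mono nhdsWithin_le_nhds
      refine (hev.mono fun z hz => ?_).frequently
      have : v z = 0 := by simp [hv, le_of_lt hz]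
      rw [this, hvx]; simpa using hr0
    · -- φ x = 0
      have hvx : v x = 0 := by simp [hv, hzero]
      have hr0 : 0 < r := by simpa [hv', hzero] using hr
      have hslope : Tendsto (fun z => (z - x)⁻¹ * (φ z - φ x)) (𝓝[>] x)
          (𝓝 (f (A x) - f (B x))) := by
        have := (hasDerivAt_iff_tendsto_slope.1 (hφderiv x hx.1))
        exact (this.mono_left (nhdsWithin_mono _ fun z hz => ne_of_gt hz)).congr
          fun z => by rw [slope_def_field]; ring
      have hd0 : f (A x) - f (B x) ≤ 0 := by
        have := hlip (A x) (B x)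
        have h2 : |A x - B x| = 0 := by rw [show A x - B x = φ x from rfl, hzero, abs_zero]
        calc f (A x) - f (B x) ≤ |f (A x) - f (B x)| := le_abs_self _
          _ ≤ K' * |A x - B x| := this
          _ = 0 := by rw [h2, mul_zero]
      have hev : ∀ᶠ z in 𝓝[>] x, (z - x)⁻¹ * (φ z - φ x) < r / 2 :=
        hslope.eventually_lt_const (by linarith)
      have hev2 : ∀ᶠ z in 𝓝[>] x, x < z := eventually_mem_nhdsWithin
      refine ((hev.and hev2).mono fun z hz => ?_).frequently
      obtain ⟨h1, h2⟩ := hz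
      have hzx : 0 < (z - x)⁻¹ := inv_pos.2 (by linarith)
      rw [hvx, sub_zero, show v z = max (φ z) 0 from rfl]
      rcases le_or_gt (φ z) 0 with h | h
      · rw [max_eq_right h, mul_zero]; linarith
      · rw [max_eq_left (le_of_lt h)]
        rw [hzero, sub_zero] at h1
        linarith
    · -- φ x > 0 : v = φ locally
      have hvx : v x = φ x := max_eq_left (le_of_lt hpos)
      have hrd : f (A x) - f (B x) < r := by simpa [hv', hpos] using hr
      have hslope : Tendsto (fun z => (z - x)⁻¹ * (φ z - φ x)) (𝓝[>] x)
          (𝓝 (f (A x) - f (B x))) := by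
        have := (hasDerivAt_iff_tendsto_slope.1 (hφderiv x hx.1))
        exact (this.mono_left (nhdsWithin_mono _ fun z hz => ne_of_gt hz)).congr
          fun z => by rw [slope_def_field]; ring
      have hev : ∀ᶠ z in 𝓝[>] x, (z - x)⁻¹ * (φ z - φ x) < r :=
        hslope.eventually_lt_const hrd
      have hcont : ContinuousAt φ x := (hφderiv x hx.1).continuousAt
      have hev2 : ∀ᶠ z in 𝓝[>] x, 0 < φ z :=
        ((hcont.tendsto.eventually_const_lt hpos)).filter_mono nhdsWithin_le_nhds
      refine ((hev.and hev2).mono fun z hz => ?_).frequently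
      obtain ⟨h1, h2⟩ := hz
      have : v z = φ z := max_eq_left (le_of_lt h2)
      rw [this, hvx]; exact h1
  · -- initial condition
    simpa [hv, hφ] using h0
  · -- bound
    intro x hx
    rcases le_or_gt (φ x) 0 with h | h
    · have : v' x = 0 := by simp [hv', not_lt.mpr h]
      rw [this]
      have : 0 ≤ v x := le_max_right _ _
      nlinarith
    · have hvx : v x = φ x := max_eq_left (le_of_lt h)
      have : v' x = f (A x) - f (B x) := by simp [hv', h]
      rw [this, hvx, add_zero]
      calc f (A x) - f (B x) ≤ |f (A x) - f (B x)| := le_abs_self _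
        _ ≤ K' * |A x - B x| := hlip _ _
        _ = K' * φ x := by rw [abs_of_pos h]

/-- Comparison of two solutions of `S' = f(S)` with `0 < m ≤ f ≤ M`:
`S₀(t) ≤ S₁(t) + (x₀ − x₁)₊ · (M/m)`. -/
theorem stmt_2 (f S₀ S₁ : ℝ → ℝ) (x₀ x₁ m M K : ℝ)
    (hf : LipschitzWith (Real.toNNReal K) f)
    (hm : 0 < m) (hfm : ∀ x, m ≤ f x) (hfM : ∀ x, f x ≤ M)
    (hS₀0 : S₀ 0 = x₀) (hS₁0 : S₁ 0 = x₁)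
    (hS₀ : ∀ t ≥ (0:ℝ), HasDerivAt S₀ (f (S₀ t)) t)
    (hS₁ : ∀ t ≥ (0:ℝ), HasDerivAt S₁ (f (S₁ t)) t) :
    ∀ t ≥ (0:ℝ), S₀ t ≤ S₁ t + max (x₀ - x₁) 0 * (M / m) := by
  set K' : ℝ := max K 0 with hK'def
  have hK' : 0 ≤ K' := le_max_right _ _
  have hlip : ∀ a b : ℝ, |f a - f b| ≤ K' * |a - b| := by
    intro a b
    have := hf.dist_le_mul a b
    simpa [Real.dist_eq, Real.coe_toNNReal'] using this
  intro t ht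
  rcases le_or_gt x₀ x₁ with hx | hx
  · have := ode_comparison f S₀ S₁ K' hK' hlip hS₀ hS₁ (by rw [hS₀0, hS₁0]; exact hx) t ht
    have hmax : max (x₀ - x₁) 0 = 0 := max_eq_right (by linarith)
    rw [hmax, zero_mul, add_zero]; exact this
  · set t₀ : ℝ := (x₀ - x₁) / m with ht₀def
    have ht₀ : 0 < t₀ := div_pos (by linarith) hm
    set B : ℝ → ℝ := fun t => S₁ (t + t₀) with hBdef
    have hB : ∀ s ≥ (0:ℝ), HasDerivAt B (f (B s)) s := by
      intro s hs
      have h1 : HasDerivAt (fun u : ℝ => u + t₀) 1 s := (hasDerivAt_id s).add_const t₀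
      have h2 := (hS₁ (s + t₀) (by linarith)).comp s h1
      simpa [hBdef, Function.comp_def] using h2
    -- S₁ t₀ ≥ x₀ : the function u ↦ S₁ u - m * u is monotone
    have hmono1 : MonotoneOn (fun u => S₁ u - m * u) (Ici (0:ℝ)) := by
      apply monotoneOn_of_hasDerivWithinAt_nonneg (convex_Ici 0)
        (f' := fun u => f (S₁ u) - m)
      · intro u hu
        exact ((hS₁ u hu).sub ((hasDerivAt_id u).const_mul m)).continuousAt.continuousWithinAt
      · intro u hu
        rw [interior_Ici] at hu
        have := ((hS₁ u (le_of_lt hu)).sub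
          (((hasDerivAt_id u).const_mul m))).hasDerivWithinAt
          (s := interior (Ici (0:ℝ)))
        simp only [mul_one] at this; exact this
      · intro u hu
        linarith [hfm (S₁ u)]
    have hB0 : S₀ 0 ≤ B 0 := by
      have h1 := hmono1 (self_mem_Ici) (mem_Ici.2 (le_of_lt ht₀)) (le_of_lt ht₀)
      simp only [mul_zero, sub_zero] at h1
      have hmt₀ : m * t₀ = x₀ - x₁ := by
        rw [ht₀def, mul_div_cancel₀ _ (ne_of_gt hm)]
      rw [hS₁0] at h1
      have hB0eq : B 0 = S₁ t₀ := by simp [hBdef]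
      rw [hS₀0, hB0eq]
      linarith
    have hcomp := ode_comparison f S₀ B K' hK' hlip hS₀ hB hB0 t ht
    -- S₁ (t + t₀) ≤ S₁ t + M * t₀ : the function u ↦ M * u - S₁ u is monotone
    have hmono2 : MonotoneOn (fun u => M * u - S₁ u) (Ici (0:ℝ)) := by
      apply monotoneOn_of_hasDerivWithinAt_nonneg (convex_Ici 0)
        (f' := fun u => M - f (S₁ u))
      · intro u hu
        exact (((hasDerivAt_id u).const_mul M).sub (hS₁ u hu)).continuousAt.continuousWithinAt
      · intro u hu
        rw [interior_Ici] at hu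
        have := (((hasDerivAt_id u).const_mul M).sub
          (hS₁ u (le_of_lt hu))).hasDerivWithinAt
          (s := interior (Ici (0:ℝ)))
        simp only [mul_one] at this; exact this
      · intro u hu
        linarith [hfM (S₁ u)]
    have h2 := hmono2 (mem_Ici.2 ht) (mem_Ici.2 (by linarith : (0:ℝ) ≤ t + t₀)) (by linarith)
    have h2' : M * t - S₁ t ≤ M * (t + t₀) - S₁ (t + t₀) := h2
    have hBt : B t ≤ S₁ t + M * t₀ := by
      have hexp : M * (t + t₀) = M * t + M * t₀ := mul_add M t t₀
      simp only [hBdef]; linarith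
    have hmax : max (x₀ - x₁) 0 = x₀ - x₁ := max_eq_left (by linarith)
    rw [hmax]
    have : (x₀ - x₁) * (M / m) = M * t₀ := by
      rw [ht₀def]; field_simp
    rw [this]
    linarith
end

section
/- Let f : ℝ → ℝ be Lipschitz with 0 < m ≤ f ≤ M, let S be the solution of S' = f(S) with S(0) = x₀, and suppose the arrival times satisfy T(x₀ + n)/n → T̄ as n → ∞ for some T̄ > 0. Then S(t)/t → 1/T̄ as t → ∞. -/
open Filter

/-- If the arrival times of the solution of `S' = f(S)` satisfy
`T(x₀+n)/n → T̄ > 0`, then `S(t)/t → 1/T̄`. -/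
theorem stmt_5 (f S : ℝ → ℝ) (x₀ m M K Tbar : ℝ)
    (hf : LipschitzWith (Real.toNNReal K) f)
    (hm : 0 < m) (hfm : ∀ x, m ≤ f x) (hfM : ∀ x, f x ≤ M)
    (hS0 : S 0 = x₀)
    (hS : ∀ t ≥ (0:ℝ), HasDerivAt S (f (S t)) t)
    (hTbar : 0 < Tbar)
    (harr : Tendsto
      (fun n : ℕ => sInf {t : ℝ | 0 < t ∧ S t = x₀ + n} / n) atTop (nhds Tbar)) :
    Tendsto (fun t : ℝ => S t / t) atTop (nhds (1 / Tbar)) := by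
  classical
  set T : ℕ → ℝ := fun n => sInf {t : ℝ | 0 < t ∧ S t = x₀ + n} with hTdef
  have hM : 0 < M := lt_of_lt_of_le hm ((hfm 0).trans (hfM 0))
  -- regularity of S on [0,∞)
  have hcont : ContinuousOn S (Set.Ici 0) :=
    fun t ht => (hS t ht).continuousAt.continuousWithinAt
  have hdiff : DifferentiableOn ℝ S (interior (Set.Ici (0:ℝ))) := by
    rw [interior_Ici]
    exact fun t ht => ((hS t (le_of_lt ht)).differentiableAt).differentiableWithinAt
  have hderiv_lb : ∀ x ∈ interior (Set.Ici (0:ℝ)), m ≤ deriv S x := by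
    rw [interior_Ici]; intro x hx; rw [(hS x hx.le).deriv]; exact hfm _
  have hderiv_ub : ∀ x ∈ interior (Set.Ici (0:ℝ)), deriv S x ≤ M := by
    rw [interior_Ici]; intro x hx; rw [(hS x hx.le).deriv]; exact hfM _
  have hub : ∀ s t : ℝ, 0 ≤ s → s ≤ t → S t - S s ≤ M * (t - s) := fun s t hs hst =>
    (convex_Ici 0).image_sub_le_mul_sub_of_deriv_le hcont hdiff hderiv_ub s hs t
      (hs.trans hst) hst
  have hlb : ∀ s t : ℝ, 0 ≤ s → s ≤ t → m * (t - s) ≤ S t - S s := fun s t hs hst =>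
    (convex_Ici 0).mul_sub_le_image_sub_of_le_deriv hcont hdiff hderiv_lb s hs t
      (hs.trans hst) hst
  have hmono : ∀ s t : ℝ, 0 ≤ s → s ≤ t → S s ≤ S t := by
    intro s t hs hst
    nlinarith [hlb s t hs hst, mul_nonneg hm.le (sub_nonneg.2 hst)]
  have hsmono : ∀ s t : ℝ, 0 ≤ s → s < t → S s < S t := by
    intro s t hs hst
    nlinarith [hlb s t hs hst.le, mul_pos hm (sub_pos.2 hst)]
  -- key facts about arrival times
  have key : ∀ n : ℕ, 1 ≤ n → S (T n) = x₀ + n ∧ (n : ℝ) / M ≤ T n ∧ T n ≤ (n : ℝ) / m := by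
    intro n hn
    have hn' : (1:ℝ) ≤ (n:ℝ) := by exact_mod_cast hn
    have hnm : (0:ℝ) ≤ (n:ℝ) / m := by positivity
    -- existence of an arrival time via IVT
    have hmn : m * ((n:ℝ)/m) = n := by field_simp
    have hSnm : x₀ + n ≤ S ((n:ℝ)/m) := by
      have h := hlb 0 ((n:ℝ)/m) le_rfl hnm
      rw [hS0] at h
      nlinarith
    have hmem : x₀ + (n:ℝ) ∈ Set.Icc (S 0) (S ((n:ℝ)/m)) := by
      constructor
      · rw [hS0]; linarith
      · exact hSnm
    obtain ⟨t, ht, hSt⟩ := intermediate_value_Icc hnm (hcont.mono Set.Icc_subset_Ici_self) hmem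
    have htpos : 0 < t := by
      rcases lt_or_eq_of_le ht.1 with h | h
      · exact h
      · exfalso; rw [← h] at hSt; rw [hS0] at hSt; linarith
    -- the set of arrival times
    have hMpos : (0:ℝ) < (n:ℝ)/M := by positivity
    have hset : {u : ℝ | 0 < u ∧ S u = x₀ + n} = Set.Ici ((n:ℝ)/M) ∩ S ⁻¹' {x₀ + (n:ℝ)} := by
      ext u
      simp only [Set.mem_setOf_eq, Set.mem_inter_iff, Set.mem_Ici, Set.mem_preimage,
        Set.mem_singleton_iff]
      constructor
      · rintro ⟨hu, hSu⟩
        refine ⟨?_, hSu⟩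
        have h := hub 0 u le_rfl hu.le
        rw [hS0, hSu] at h
        rw [div_le_iff₀ hM]
        linarith
      · rintro ⟨hu, hSu⟩
        exact ⟨lt_of_lt_of_le hMpos hu, hSu⟩
    have hclosed : IsClosed {u : ℝ | 0 < u ∧ S u = x₀ + n} := by
      rw [hset]
      exact ContinuousOn.preimage_isClosed_of_isClosed
        (hcont.mono (Set.Ici_subset_Ici.2 hMpos.le)) isClosed_Ici isClosed_singleton
    have hbdd : BddBelow {u : ℝ | 0 < u ∧ S u = x₀ + n} := by
      rw [hset]
      exact ⟨(n:ℝ)/M, fun u hu => hu.1⟩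
    have hne : {u : ℝ | 0 < u ∧ S u = x₀ + n}.Nonempty := ⟨t, htpos, hSt⟩
    obtain ⟨hp, hv⟩ := hclosed.csInf_mem hne hbdd
    refine ⟨hv, ?_, (csInf_le hbdd ⟨htpos, hSt⟩).trans ht.2⟩
    have h := hub 0 (T n) le_rfl hp.le
    rw [hS0, hv] at h
    rw [div_le_iff₀ hM]
    linarith
  have hTpos : ∀ n : ℕ, 1 ≤ n → 0 < T n := fun n hn =>
    lt_of_lt_of_le (by positivity : (0:ℝ) < (n:ℝ)/M) (key n hn).2.1
  -- the index function
  set N : ℝ → ℕ := fun t => Nat.findGreatest (fun n => T n ≤ t) ⌊M * t⌋₊ with hNdef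
  have hbnd : ∀ t : ℝ, ∀ k : ℕ, 1 ≤ k → T k ≤ t → k ≤ ⌊M * t⌋₊ := by
    intro t k hk hTk
    apply Nat.le_floor
    have h := (key k hk).2.1
    rw [div_le_iff₀ hM] at h
    calc (k:ℝ) ≤ T k * M := h
      _ ≤ t * M := by nlinarith [hTpos k hk]
      _ = M * t := mul_comm _ _
  have hNle : ∀ t : ℝ, ∀ k : ℕ, 1 ≤ k → T k ≤ t → k ≤ N t := by
    intro t k hk hTk
    exact Nat.le_findGreatest (hbnd t k hk hTk) hTk
  -- N tendsto atTop
  have hN_top : Tendsto N atTop atTop := by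
    rw [tendsto_atTop]
    intro b
    filter_upwards [eventually_ge_atTop (T (max b 1))] with t ht
    calc b ≤ max b 1 := le_max_left _ _
      _ ≤ N t := hNle t _ (le_max_right _ _) ht
  -- properties of N t for t ≥ T 1
  have hNspec : ∀ t : ℝ, T 1 ≤ t → 1 ≤ N t ∧ T (N t) ≤ t ∧ t < T (N t + 1) := by
    intro t ht
    have h1 : 1 ≤ N t := hNle t 1 le_rfl ht
    have h2 : T (N t) ≤ t :=
      Nat.findGreatest_spec (P := fun n => T n ≤ t) (m := 1) (hbnd t 1 le_rfl ht) ht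
    refine ⟨h1, h2, ?_⟩
    by_contra h
    push_neg at h
    have hb : N t + 1 ≤ ⌊M * t⌋₊ := hbnd t (N t + 1) (Nat.le_add_left 1 (N t)) h
    exact Nat.findGreatest_is_greatest (P := fun n => T n ≤ t) (Nat.lt_succ_self _) hb h
  -- the comparison sequences
  have hTn : Tendsto (fun n : ℕ => T n / n) atTop (nhds Tbar) := harr
  have hTn1 : Tendsto (fun n : ℕ => T (n+1) / ((n:ℝ)+1)) atTop (nhds Tbar) := by
    have h := hTn.comp (tendsto_add_atTop_nat 1)
    apply h.congr
    intro n
    simp only [Function.comp]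
    push_cast
    ring_nf
  have hnum1 : Tendsto (fun n : ℕ => (x₀ + n) / ((n:ℝ) + 1)) atTop (nhds 1) := by
    have h1 : Tendsto (fun n : ℕ => ((n:ℝ) + 1)) atTop atTop :=
      tendsto_atTop_add_const_right _ 1 tendsto_natCast_atTop_atTop
    have h2 : Tendsto (fun n : ℕ => (x₀ - 1) / ((n:ℝ) + 1)) atTop (nhds 0) :=
      Tendsto.div_atTop tendsto_const_nhds h1
    have h3 := h2.add_const 1
    rw [zero_add] at h3
    apply h3.congr
    intro n
    have hn1 : ((n:ℝ) + 1) ≠ 0 := by positivity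
    field_simp
    ring
  have hnum2 : Tendsto (fun n : ℕ => (x₀ + n + 1) / (n : ℝ)) atTop (nhds 1) := by
    have h2 : Tendsto (fun n : ℕ => (x₀ + 1) / ((n:ℝ))) atTop (nhds 0) :=
      Tendsto.div_atTop tendsto_const_nhds tendsto_natCast_atTop_atTop
    have h3 := h2.add_const 1
    rw [zero_add] at h3
    apply h3.congr'
    filter_upwards [eventually_ge_atTop 1] with n hn
    have hn' : ((n:ℝ)) ≠ 0 := by
      have : (1:ℝ) ≤ (n:ℝ) := by exact_mod_cast hn
      positivity
    field_simp
    ring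
  have ha : Tendsto (fun n : ℕ => (x₀ + n) / T (n+1)) atTop (nhds (1 / Tbar)) := by
    have h := hnum1.div hTn1 (ne_of_gt hTbar)
    apply h.congr'
    filter_upwards [eventually_ge_atTop 1] with n hn
    have hT1 : (0:ℝ) < T (n+1) := hTpos (n+1) (Nat.le_add_left 1 n)
    have hn1 : ((n:ℝ) + 1) ≠ 0 := by positivity
    simp only [Pi.div_apply]
    field_simp
  have hbseq : Tendsto (fun n : ℕ => (x₀ + n + 1) / T n) atTop (nhds (1 / Tbar)) := by
    have h := hnum2.div hTn (ne_of_gt hTbar)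
    apply h.congr'
    filter_upwards [eventually_ge_atTop 1] with n hn
    have hT1 : (0:ℝ) < T n := hTpos n hn
    have hn' : ((n:ℝ)) ≠ 0 := by
      have : (1:ℝ) ≤ (n:ℝ) := by exact_mod_cast hn
      positivity
    simp only [Pi.div_apply]
    field_simp
  -- squeeze
  obtain ⟨k₀, hk₀1, hk₀2⟩ : ∃ k₀ : ℕ, 1 ≤ k₀ ∧ 0 ≤ x₀ + k₀ := by
    refine ⟨max 1 ⌈-x₀⌉₊, le_max_left _ _, ?_⟩
    have h1 : -x₀ ≤ (⌈-x₀⌉₊ : ℝ) := Nat.le_ceil _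
    have h2 : ((⌈-x₀⌉₊ : ℕ) : ℝ) ≤ ((max 1 ⌈-x₀⌉₊ : ℕ) : ℝ) := by
      exact_mod_cast le_max_right 1 ⌈-x₀⌉₊
    linarith
  apply tendsto_of_tendsto_of_tendsto_of_le_of_le' (ha.comp hN_top) (hbseq.comp hN_top)
  · -- lower bound
    filter_upwards [eventually_ge_atTop (T 1), eventually_ge_atTop (T k₀),
      eventually_gt_atTop (0:ℝ)] with t ht1 htk ht0
    obtain ⟨hN1, hNle', hNlt⟩ := hNspec t ht1
    have hNk₀ : k₀ ≤ N t := hNle t k₀ hk₀1 htk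
    have hx₀N : 0 ≤ x₀ + (N t : ℝ) := by
      have h : (k₀:ℝ) ≤ (N t : ℝ) := by exact_mod_cast hNk₀
      linarith
    have hSt : x₀ + (N t : ℝ) ≤ S t := by
      have h := hmono (T (N t)) t (hTpos (N t) hN1).le hNle'
      rw [(key (N t) hN1).1] at h
      exact h
    exact div_le_div₀ (hx₀N.trans hSt) hSt ht0 hNlt.le
  · -- upper bound
    filter_upwards [eventually_ge_atTop (T 1), eventually_ge_atTop (T k₀),
      eventually_gt_atTop (0:ℝ)] with t ht1 htk ht0
    obtain ⟨hN1, hNle', hNlt⟩ := hNspec t ht1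
    have hNk₀ : k₀ ≤ N t := hNle t k₀ hk₀1 htk
    have hx₀N : 0 ≤ x₀ + (N t : ℝ) := by
      have h : (k₀:ℝ) ≤ (N t : ℝ) := by exact_mod_cast hNk₀
      linarith
    have hSt : S t ≤ x₀ + (N t : ℝ) + 1 := by
      have h := hmono t (T (N t + 1)) ht0.le hNlt.le
      rw [(key (N t + 1) (Nat.le_add_left 1 (N t))).1] at h
      push_cast at h
      linarith
    exact div_le_div₀ (by linarith) hSt (hTpos (N t) hN1) hNle'
end

section
/- Let a : ℝ → ℝ be measurable with 0 < λ ≤ a ≤ Λ and suppose that for all z ∈ ℝ, (1/M)∫_{z−M}^z dy/a(y) → 1/ā as M → ∞, uniformly for z in compact sets. Fix x₀, q > 0. Then the boundary gradient g_N(S) := q·((1/(S−x₀+N))∫_{x₀−N}^S dy/a(y))⁻¹·(1/a(S)) satisfies: for every S ≥ x₀, g_N(S) → q·ā/a(S) as N → ∞, and the convergence is uniform for S in compact subsets of [x₀,∞) at points of continuity of a. -/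
open Filter Set

lemma aux_est (lam abar q ε : ℝ) (hlam : 0 < lam) (habar : 0 < abar) (hq : 0 < q)
    (hε : 0 < ε) (x s : ℝ) (hs : lam ≤ s)
    (hx : |1 / abar - x| < min (1 / (2 * abar)) (ε * lam / (4 * q * abar ^ 2))) :
    |q * abar / s - q * x⁻¹ * (1 / s)| < ε := by
  have hx1 : |1 / abar - x| < 1 / (2 * abar) := lt_of_lt_of_le hx (min_le_left _ _)
  have hx2 : |1 / abar - x| < ε * lam / (4 * q * abar ^ 2) :=
    lt_of_lt_of_le hx (min_le_right _ _)
  have hkey : 1 / abar - 1 / (2 * abar) = 1 / (2 * abar) := by field_simp; ring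
  have hx' : 1 / (2 * abar) < x := by
    have := (abs_lt.mp hx1).2
    linarith
  have hxpos : 0 < x := lt_trans (by positivity) hx'
  have hs0 : 0 < s := lt_of_lt_of_le hlam hs
  have hinv : |abar - x⁻¹| ≤ 2 * abar ^ 2 * |1 / abar - x| := by
    have h1 : abar - x⁻¹ = abar * (x - 1 / abar) / x := by field_simp
    rw [h1, abs_div, abs_mul, abs_of_pos habar, abs_of_pos hxpos, abs_sub_comm x]
    rw [div_le_iff₀ hxpos]
    have h2 : abar ≤ 2 * abar ^ 2 * x := by
      have : 2 * abar ^ 2 * (1 / (2 * abar)) = abar := by field_simp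
      nlinarith
    nlinarith [abs_nonneg (1 / abar - x)]
  have heq : q * abar / s - q * x⁻¹ * (1 / s) = q / s * (abar - x⁻¹) := by ring
  rw [heq, abs_mul, abs_of_pos (div_pos hq hs0)]
  have h2 : q / s ≤ q / lam := div_le_div_of_nonneg_left hq.le hlam hs
  have h3 : |abar - x⁻¹| < ε * lam / (2 * q) := by
    have heq2 : 2 * abar ^ 2 * (ε * lam / (4 * q * abar ^ 2)) = ε * lam / (2 * q) := by
      field_simp; ring
    calc |abar - x⁻¹| ≤ 2 * abar ^ 2 * |1 / abar - x| := hinv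
      _ < 2 * abar ^ 2 * (ε * lam / (4 * q * abar ^ 2)) :=
          mul_lt_mul_of_pos_left hx2 (by positivity)
      _ = ε * lam / (2 * q) := heq2
  calc q / s * |abar - x⁻¹| ≤ q / lam * |abar - x⁻¹| := by
        apply mul_le_mul_of_nonneg_right h2 (abs_nonneg _)
    _ < q / lam * (ε * lam / (2 * q)) := by
        exact mul_lt_mul_of_pos_left h3 (div_pos hq hlam)
    _ = ε / 2 := by field_simp
    _ < ε := by linarith

/-- Convergence of the finite-domain boundary gradient to the effective one:
if the averaged harmonic means of `a` converge uniformly on compacts to `1/ā`,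
then `g_N(S) = q ((1/(S−x₀+N)) ∫_{x₀−N}^S 1/a)⁻¹ / a(S) → q ā / a(S)` as
`N → ∞`, pointwise on `[x₀,∞)` and uniformly on compacts where `a` is
continuous. -/
theorem stmt_10 (a : ℝ → ℝ) (lam Lam abar x₀ q : ℝ)
    (ha : Measurable a) (hlam : 0 < lam)
    (habd : ∀ x, lam ≤ a x ∧ a x ≤ Lam)
    (habar : 0 < abar) (hq : 0 < q)
    (havg : ∀ K : Set ℝ, IsCompact K →
      TendstoUniformlyOn
        (fun (M : ℝ) (z : ℝ) => (1 / M) * ∫ y in (z - M)..z, 1 / a y)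
        (fun _ => 1 / abar) atTop K) :
    (∀ S ≥ x₀,
      Tendsto
        (fun N : ℝ =>
          q * ((1 / (S - x₀ + N)) * ∫ y in (x₀ - N)..S, 1 / a y)⁻¹ * (1 / a S))
        atTop (nhds (q * abar / a S))) ∧
    (∀ K : Set ℝ, K ⊆ Ici x₀ → IsCompact K → ContinuousOn a K →
      TendstoUniformlyOn
        (fun (N : ℝ) (S : ℝ) =>
          q * ((1 / (S - x₀ + N)) * ∫ y in (x₀ - N)..S, 1 / a y)⁻¹ * (1 / a S))
        (fun S => q * abar / a S) atTop K) := by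
  -- uniform convergence of the inner average
  have huniv : ∀ K : Set ℝ, K ⊆ Ici x₀ → IsCompact K →
      TendstoUniformlyOn
        (fun (N : ℝ) (S : ℝ) => (1 / (S - x₀ + N)) * ∫ y in (x₀ - N)..S, 1 / a y)
        (fun _ => 1 / abar) atTop K := by
    intro K hKsub hK
    rw [Metric.tendstoUniformlyOn_iff]
    intro ε hε
    have h := (Metric.tendstoUniformlyOn_iff.mp (havg K hK)) ε hε
    rw [eventually_atTop] at h ⊢
    obtain ⟨M₀, hM₀⟩ := h
    refine ⟨M₀, fun N hN S hS => ?_⟩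
    have hSx : x₀ ≤ S := hKsub hS
    have hM : M₀ ≤ S - x₀ + N := by linarith
    have := hM₀ (S - x₀ + N) hM S hS
    have harg : S - (S - x₀ + N) = x₀ - N := by ring
    rw [harg] at this
    exact this
  constructor
  · intro S hS
    have hpt : Tendsto
        (fun N : ℝ => (1 / (S - x₀ + N)) * ∫ y in (x₀ - N)..S, 1 / a y)
        atTop (nhds (1 / abar)) := by
      have h1 := (huniv {S} (by simpa using hS) isCompact_singleton).tendsto_at
        (mem_singleton S)
      exact h1
    have haS : 0 < a S := lt_of_lt_of_le hlam (habd S).1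
    have habar' : (1 : ℝ) / abar ≠ 0 := by positivity
    have h2 : Tendsto
        (fun N : ℝ =>
          q * ((1 / (S - x₀ + N)) * ∫ y in (x₀ - N)..S, 1 / a y)⁻¹ * (1 / a S))
        atTop (nhds (q * (1 / abar)⁻¹ * (1 / a S))) :=
      ((hpt.inv₀ habar').const_mul q).mul_const _
    have : q * (1 / abar)⁻¹ * (1 / a S) = q * abar / a S := by
      rw [one_div, inv_inv]; ring
    rwa [this] at h2
  · intro K hKsub hK _hcont
    rw [Metric.tendstoUniformlyOn_iff]
    intro ε hε
    set δ := min (1 / (2 * abar)) (ε * lam / (4 * q * abar ^ 2)) with hδdef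
    have hδ : 0 < δ := lt_min (by positivity) (by positivity)
    have h := (Metric.tendstoUniformlyOn_iff.mp (huniv K hKsub hK)) δ hδ
    filter_upwards [h] with N hN S hS
    have hdist := hN S hS
    rw [Real.dist_eq] at hdist ⊢
    exact aux_est lam abar q ε hlam habar hq hε _ _ (habd S).1 hdist
end

section
/- Let f, g : ℝ → ℝ be Lipschitz with 0 < m ≤ f ≤ M, 0 ≤ g ≤ M, and let q₁ ≥ 0, γ ∈ (0,1). Let S and S̃ solve S' = q₁f(S) + g(S) and S̃' = (1+γ)q₁ f(S̃) + g(S̃) with the same initial condition. Then S((1+γ)t) ≥ S̃(t) for all t ≥ 0; consequently, if S(t)/t → V and S̃(t)/t → Ṽ as t → ∞, then (1+γ)V ≥ Ṽ. -/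
open Filter Set

/-- Scaling comparison for the effective ODE: if `S' = q₁f(S)+g(S)` and
`S̃' = (1+γ)q₁f(S̃)+g(S̃)` with the same initial data, then
`S((1+γ)t) ≥ S̃(t)`; consequently `(1+γ)V ≥ Ṽ` for the asymptotic speeds. -/
theorem stmt_14 (f g S St : ℝ → ℝ) (q₁ γ m M Kf Kg V Vt : ℝ)
    (hf : LipschitzWith (Real.toNNReal Kf) f)
    (hg : LipschitzWith (Real.toNNReal Kg) g)
    (hm : 0 < m) (hfm : ∀ x, m ≤ f x) (hfM : ∀ x, f x ≤ M)
    (hg0 : ∀ x, 0 ≤ g x) (hgM : ∀ x, g x ≤ M)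
    (hq₁ : 0 ≤ q₁) (hγ : γ ∈ Set.Ioo (0:ℝ) 1)
    (hinit : S 0 = St 0)
    (hS : ∀ t ≥ (0:ℝ), HasDerivAt S (q₁ * f (S t) + g (S t)) t)
    (hSt : ∀ t ≥ (0:ℝ), HasDerivAt St ((1 + γ) * q₁ * f (St t) + g (St t)) t) :
    (∀ t ≥ (0:ℝ), S ((1 + γ) * t) ≥ St t) ∧
    (Tendsto (fun t : ℝ => S t / t) atTop (nhds V) →
      Tendsto (fun t : ℝ => St t / t) atTop (nhds Vt) →
      (1 + γ) * V ≥ Vt) := by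
  obtain ⟨hγ0, hγ1⟩ := hγ
  have hγ1' : (0:ℝ) < 1 + γ := by linarith
  set Kf' : ℝ := (Real.toNNReal Kf : ℝ) with hKf'
  set Kg' : ℝ := (Real.toNNReal Kg : ℝ) with hKg'
  have hKf0 : 0 ≤ Kf' := (Real.toNNReal Kf).2
  have hKg0 : 0 ≤ Kg' := (Real.toNNReal Kg).2
  set T : ℝ → ℝ := fun t => S ((1 + γ) * t) with hTdef
  have hTd : ∀ t ≥ (0:ℝ), HasDerivAt T ((1 + γ) * (q₁ * f (T t) + g (T t))) t := by
    intro t ht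
    have h1 : (0:ℝ) ≤ (1 + γ) * t := by positivity
    have h2 : HasDerivAt (fun s : ℝ => (1 + γ) * s) (1 + γ) t := by
      simpa using (hasDerivAt_id t).const_mul (1 + γ)
    have h3 := (hS _ h1).comp t h2
    simp only [Function.comp_def] at h3
    rw [mul_comm] at h3
    exact h3
  have hud : ∀ t ≥ (0:ℝ), HasDerivAt (fun t => St t - T t)
      (((1 + γ) * q₁ * f (St t) + g (St t)) - (1 + γ) * (q₁ * f (T t) + g (T t))) t :=
    fun t ht => (hSt t ht).sub (hTd t ht)
  have hu0 : St 0 - T 0 = 0 := by simp [hTdef, hinit]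
  -- key pointwise bound when St t - T t ≥ 0
  have hbound : ∀ t, 0 ≤ St t - T t →
      ((1 + γ) * q₁ * f (St t) + g (St t)) - (1 + γ) * (q₁ * f (T t) + g (T t)) ≤
        ((1 + γ) * q₁ * Kf' + Kg') * (St t - T t) := by
    intro t hut
    have h1 : f (St t) - f (T t) ≤ Kf' * (St t - T t) := by
      have h := hf.dist_le_mul (St t) (T t)
      rw [Real.dist_eq, Real.dist_eq] at h
      calc f (St t) - f (T t) ≤ |f (St t) - f (T t)| := le_abs_self _
        _ ≤ Kf' * |St t - T t| := h
        _ = Kf' * (St t - T t) := by rw [abs_of_nonneg hut]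
    have h2 : g (St t) - g (T t) ≤ Kg' * (St t - T t) := by
      have h := hg.dist_le_mul (St t) (T t)
      rw [Real.dist_eq, Real.dist_eq] at h
      calc g (St t) - g (T t) ≤ |g (St t) - g (T t)| := le_abs_self _
        _ ≤ Kg' * |St t - T t| := h
        _ = Kg' * (St t - T t) := by rw [abs_of_nonneg hut]
    have h4 : (0:ℝ) ≤ (1 + γ) * q₁ := by positivity
    have h1' := mul_le_mul_of_nonneg_left h1 h4
    have h3' : 0 ≤ γ * g (T t) := mul_nonneg hγ0.le (hg0 _)
    nlinarith [h1', h2, h3']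
  -- main comparison
  have key : ∀ t ≥ (0:ℝ), St t ≤ T t := by
    intro t₀ ht₀
    by_contra hpos
    push_neg at hpos
    have hu_pos : 0 < St t₀ - T t₀ := sub_pos.mpr hpos
    set A : Set ℝ := {t | t ∈ Icc (0:ℝ) t₀ ∧ St t - T t ≤ 0} with hA
    have h0A : (0:ℝ) ∈ A := ⟨⟨le_refl 0, ht₀⟩, hu0.le⟩
    have hA_ne : A.Nonempty := ⟨0, h0A⟩
    have hA_bdd : BddAbove A := ⟨t₀, fun x hx => hx.1.2⟩
    set c := sSup A with hc
    have hc_mem : c ∈ Icc (0:ℝ) t₀ := ⟨le_csSup hA_bdd h0A, csSup_le hA_ne fun x hx => hx.1.2⟩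
    have hccl : c ∈ closure A := csSup_mem_closure hA_ne hA_bdd
    have hucont : ∀ s ≥ (0:ℝ), ContinuousAt (fun t => St t - T t) s :=
      fun s hs => (hud s hs).continuousAt
    have hcu_le : St c - T c ≤ 0 := by
      exact ContinuousWithinAt.closure_le hccl ((hucont c hc_mem.1).continuousWithinAt)
        continuousWithinAt_const fun y hy => hy.2
    have hc_lt : c < t₀ := by
      rcases lt_or_eq_of_le hc_mem.2 with h | h
      · exact h
      · exact absurd (h ▸ hcu_le) (not_le.mpr hu_pos)
    have hupos' : ∀ t ∈ Ioc c t₀, 0 < St t - T t := by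
      intro t ht
      by_contra hle
      push_neg at hle
      have : t ∈ A := ⟨⟨hc_mem.1.trans ht.1.le, ht.2⟩, hle⟩
      exact absurd (le_csSup hA_bdd this) (not_le.mpr ht.1)
    have hcu_ge : 0 ≤ St c - T c := by
      have hccl2 : c ∈ closure (Ioc c t₀) := by
        rw [closure_Ioc hc_lt.ne]; exact ⟨le_refl c, hc_lt.le⟩
      exact ContinuousWithinAt.closure_le hccl2 continuousWithinAt_const
        ((hucont c hc_mem.1).continuousWithinAt) fun y hy => (hupos' y hy).le
    have hcu : St c - T c = 0 := le_antisymm hcu_le hcu_ge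
    have hunonneg : ∀ t ∈ Ico c t₀, 0 ≤ St t - T t := by
      intro t ht
      rcases eq_or_lt_of_le ht.1 with h | h
      · rw [← h]; exact hcu_ge
      · exact (hupos' t ⟨h, ht.2.le⟩).le
    have hgr := le_gronwallBound_of_liminf_deriv_right_le
      (f := fun t => St t - T t)
      (f' := fun t => ((1 + γ) * q₁ * f (St t) + g (St t)) - (1 + γ) * (q₁ * f (T t) + g (T t)))
      (δ := 0) (K := (1 + γ) * q₁ * Kf' + Kg') (ε := 0) (a := c) (b := t₀)
      (fun s hs => ((hucont s (hc_mem.1.trans hs.1)).continuousWithinAt))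
      (fun x hx r hr => by
        have hx0 : (0:ℝ) ≤ x := hc_mem.1.trans hx.1
        have h := ((hud x hx0).hasDerivWithinAt (s := Ici x)).liminf_right_slope_le hr
        refine h.mono fun z hz => ?_
        rwa [slope_def_field, div_eq_inv_mul] at hz)
      (le_of_eq hcu)
      (fun x hx => by simpa using hbound x (hunonneg x hx))
    have := hgr t₀ ⟨hc_lt.le, le_refl t₀⟩
    rw [gronwallBound_ε0_δ0] at this
    exact absurd this (not_le.mpr hu_pos)
  refine ⟨fun t ht => key t ht, fun hV hVt => ?_⟩
  -- asymptotic comparison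
  have hcomp : Tendsto (fun t : ℝ => (1 + γ) * (S ((1 + γ) * t) / ((1 + γ) * t)))
      atTop (nhds ((1 + γ) * V)) := by
    have h1 : Tendsto (fun t : ℝ => (1 + γ) * t) atTop atTop :=
      Tendsto.const_mul_atTop hγ1' tendsto_id
    exact (hV.comp h1).const_mul (1 + γ)
  have heq : ∀ᶠ t : ℝ in atTop, St t / t ≤ (1 + γ) * (S ((1 + γ) * t) / ((1 + γ) * t)) := by
    filter_upwards [eventually_gt_atTop (0:ℝ)] with t ht
    have h1 : St t ≤ S ((1 + γ) * t) := key t ht.le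
    have h2 : (1 + γ) * (S ((1 + γ) * t) / ((1 + γ) * t)) = S ((1 + γ) * t) / t := by
      field_simp
    rw [h2]
    gcongr
  exact le_of_tendsto_of_tendsto hVt hcomp heq
end
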